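/- As λ → ∞, λ³ · Var_λ(1/(N+1)) → 1, where Var_λ(1/(N+1)) = ∑_{k=0}^∞ e^{-λ} λ^k / k! · 1/(k+1)² − ( ∑_{k=0}^∞ e^{-λ} λ^k / k! · 1/(k+1) )² is the variance of 1/(N+1) under the Poisson distribution with parameter λ. That is, Var_λ(1/(N+1)) = λ^{-3}(1 + o(1)). -/

import Mathlib

/-!
Writing `(k + 1)⋯(k + m)` for the ascending factorial, shifting the exponential series gives
`E[1 / ((N + 1)⋯(N + m))] = P(N ≥ m) / λ ^ m`. The inverse factorial series
`1 / (k + 1) ^ 2 = ∑_{m ≥ 2} (m - 2)! / ((k + 1)⋯(k + m))`, truncated after two terms with a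
remainder between `0` and `8 / ((k + 1)⋯(k + 4))`, then turns `λ³ Var_λ(1 / (N + 1))` into
`P(N ≥ 3) + λ (P(N ≥ 2) - P(N ≥ 1) ^ 2) + O(1 / λ)`. Each `P(N ≥ m)` tends to `1`, and
`λ (P(N ≥ 2) - P(N ≥ 1) ^ 2) = λ e^{-λ} - λ² e^{-λ} - λ e^{-2λ}` tends to `0`.
-/

open Filter Real Finset Topology Nat

noncomputable def poissonExpectation (l : ℝ) (f : ℕ → ℝ) : ℝ :=
  ∑' k : ℕ, exp (-l) * l ^ k / (k ! : ℝ) * f k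

/-- `P(N ≥ m)` for `N ∼ Poisson(l)`. -/
noncomputable def poissonTail (l : ℝ) (m : ℕ) : ℝ :=
  1 - exp (-l) * ∑ i ∈ range m, l ^ i / (i ! : ℝ)

noncomputable def invSuccSqRemainder (k : ℕ) : ℝ :=
  2 / (((k : ℝ) + 1) ^ 2 * (k + 2) * (k + 3))

lemma hasSum_pow_div_factorial_nat_add (x : ℝ) (m : ℕ) :
    HasSum (fun k ↦ x ^ (k + m) / ((k + m)! : ℝ)) (exp x - ∑ i ∈ range m, x ^ i / (i ! : ℝ)) :=
  (hasSum_nat_add_iff' m).2 <| by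
    simpa [← Real.exp_eq_exp_ℝ] using NormedSpace.expSeries_div_hasSum_exp x

lemma hasSum_poisson_div_ascFactorial {l : ℝ} (hl : l ≠ 0) (m : ℕ) :
    HasSum (fun k ↦ exp (-l) * l ^ k / (k ! : ℝ) * (1 / ((k + 1).ascFactorial m : ℝ)))
      (poissonTail l m / l ^ m) := by
  have hterm (k : ℕ) : exp (-l) * l ^ k / (k ! : ℝ) * (1 / ((k + 1).ascFactorial m : ℝ))
      = exp (-l) / l ^ m * (l ^ (k + m) / ((k + m)! : ℝ)) := by
    rw [← Nat.factorial_mul_ascFactorial, Nat.cast_mul, pow_add]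
    field_simp
  have hval : poissonTail l m / l ^ m
      = exp (-l) / l ^ m * (exp l - ∑ i ∈ range m, l ^ i / (i ! : ℝ)) := by
    unfold poissonTail
    rw [exp_neg]
    field_simp
  simpa only [hterm, hval] using (hasSum_pow_div_factorial_nat_add l m).mul_left _

lemma poissonExpectation_div_ascFactorial {l : ℝ} (hl : l ≠ 0) (m : ℕ) :
    poissonExpectation l (fun k ↦ 1 / ((k + 1).ascFactorial m : ℝ)) = poissonTail l m / l ^ m :=
  (hasSum_poisson_div_ascFactorial hl m).tsum_eq

lemma poissonExpectation_one_div_add_one {l : ℝ} (hl : l ≠ 0) :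
    poissonExpectation l (fun k ↦ 1 / ((k : ℝ) + 1)) = poissonTail l 1 / l := by
  simpa [Nat.ascFactorial_succ] using poissonExpectation_div_ascFactorial hl 1

lemma tendsto_poissonTail_atTop (m : ℕ) : Tendsto (poissonTail · m) atTop (𝓝 1) := by
  have h : Tendsto (fun l ↦ exp (-l) * ∑ i ∈ range m, l ^ i / (i ! : ℝ)) atTop (𝓝 0) := by
    have := tendsto_finsetSum (range m) fun i _ ↦
      (tendsto_pow_mul_exp_neg_atTop_nhds_zero i).div_const (i ! : ℝ)
    simp only [zero_div, sum_const_zero] at this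
    refine this.congr fun l ↦ ?_
    rw [mul_sum]
    exact sum_congr rfl fun i _ ↦ by ring
  simpa [poissonTail] using (tendsto_const_nhds (x := (1 : ℝ))).sub h

lemma tendsto_mul_poissonTail_two_sub_sq :
    Tendsto (fun l ↦ l * (poissonTail l 2 - poissonTail l 1 ^ 2)) atTop (𝓝 0) := by
  have h1 := tendsto_pow_mul_exp_neg_atTop_nhds_zero 1
  have h2 := tendsto_pow_mul_exp_neg_atTop_nhds_zero 2
  have h := (h1.sub h2).sub (h1.mul tendsto_exp_neg_atTop_nhds_zero)
  simp only [sub_zero, mul_zero] at h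
  refine h.congr fun l ↦ ?_
  simp only [poissonTail, sum_range_succ, sum_range_zero]
  ring

lemma one_div_add_one_sq_eq (k : ℕ) :
    1 / ((k : ℝ) + 1) ^ 2 = 1 / ((k + 1).ascFactorial 2 : ℝ) + 1 / ((k + 1).ascFactorial 3 : ℝ)
      + invSuccSqRemainder k := by
  push_cast [invSuccSqRemainder, Nat.ascFactorial_succ, Nat.ascFactorial_zero]
  field_simp
  ring

lemma invSuccSqRemainder_nonneg (k : ℕ) : 0 ≤ invSuccSqRemainder k := by
  unfold invSuccSqRemainder
  positivity

lemma invSuccSqRemainder_le (k : ℕ) :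
    invSuccSqRemainder k ≤ 8 * (1 / ((k + 1).ascFactorial 4 : ℝ)) := by
  push_cast [invSuccSqRemainder, Nat.ascFactorial_succ, Nat.ascFactorial_zero]
  rw [mul_one_div, div_le_div_iff₀ (by positivity) (by positivity)]
  have : 0 ≤ ((k : ℝ) + 1) * (k + 2) * (k + 3) * k := by positivity
  nlinarith

lemma poisson_mul_invSuccSqRemainder_le {l : ℝ} (hl : 0 ≤ l) (k : ℕ) :
    exp (-l) * l ^ k / (k ! : ℝ) * invSuccSqRemainder k
      ≤ 8 * (exp (-l) * l ^ k / (k ! : ℝ) * (1 / ((k + 1).ascFactorial 4 : ℝ))) := by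
  rw [mul_left_comm]
  exact mul_le_mul_of_nonneg_left (invSuccSqRemainder_le k) (by positivity)

lemma summable_poisson_mul_invSuccSqRemainder {l : ℝ} (hl : 0 < l) :
    Summable fun k : ℕ ↦ exp (-l) * l ^ k / (k ! : ℝ) * invSuccSqRemainder k :=
  .of_nonneg_of_le (fun k ↦ mul_nonneg (by positivity) (invSuccSqRemainder_nonneg k))
    (poisson_mul_invSuccSqRemainder_le hl.le)
    ((hasSum_poisson_div_ascFactorial hl.ne' 4).summable.mul_left 8)

lemma poissonExpectation_invSuccSqRemainder_nonneg {l : ℝ} (hl : 0 ≤ l) :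
    0 ≤ poissonExpectation l invSuccSqRemainder :=
  tsum_nonneg fun k ↦ mul_nonneg (by positivity) (invSuccSqRemainder_nonneg k)

lemma poissonExpectation_invSuccSqRemainder_le {l : ℝ} (hl : 0 < l) :
    poissonExpectation l invSuccSqRemainder ≤ 8 * (poissonTail l 4 / l ^ 4) := by
  have h4 := (hasSum_poisson_div_ascFactorial hl.ne' 4).mul_left 8
  rw [← h4.tsum_eq]
  exact (summable_poisson_mul_invSuccSqRemainder hl).tsum_le_tsum
    (poisson_mul_invSuccSqRemainder_le hl.le) h4.summable

lemma poissonExpectation_one_div_add_one_sq {l : ℝ} (hl : 0 < l) :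
    poissonExpectation l (fun k ↦ 1 / ((k : ℝ) + 1) ^ 2)
      = poissonTail l 2 / l ^ 2 + poissonTail l 3 / l ^ 3
        + poissonExpectation l invSuccSqRemainder := by
  have h := ((hasSum_poisson_div_ascFactorial hl.ne' 2).add
    (hasSum_poisson_div_ascFactorial hl.ne' 3)).add
      (summable_poisson_mul_invSuccSqRemainder hl).hasSum
  refine h.tsum_eq ▸ tsum_congr fun k ↦ ?_
  simp only [one_div_add_one_sq_eq]
  ring

lemma tendsto_cube_mul_poissonExpectation_invSuccSqRemainder :
    Tendsto (fun l ↦ l ^ 3 * poissonExpectation l invSuccSqRemainder) atTop (𝓝 0) := by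
  have hbound : Tendsto (fun l ↦ 8 * (poissonTail l 4 * l⁻¹)) atTop (𝓝 0) := by
    simpa using ((tendsto_poissonTail_atTop 4).mul tendsto_inv_atTop_zero).const_mul 8
  refine tendsto_of_tendsto_of_tendsto_of_le_of_le' tendsto_const_nhds hbound ?_ ?_
  all_goals filter_upwards [eventually_gt_atTop 0] with l hl
  · exact mul_nonneg (by positivity) (poissonExpectation_invSuccSqRemainder_nonneg hl.le)
  · calc l ^ 3 * poissonExpectation l invSuccSqRemainder
        ≤ l ^ 3 * (8 * (poissonTail l 4 / l ^ 4)) := by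
          gcongr
          exact poissonExpectation_invSuccSqRemainder_le hl
      _ = 8 * (poissonTail l 4 * l⁻¹) := by
          field_simp

/-- As `λ → ∞`, `λ³ · Var_λ(1/(N+1)) → 1`, where `N ∼ Poisson(λ)`;
i.e. `Var_λ(1/(N+1)) = λ⁻³ (1 + o(1))`. -/
theorem poisson_var_inv_succ_asymptotics :
    Filter.Tendsto
      (fun l : ℝ => l ^ 3 *
        ((∑' k : ℕ, Real.exp (-l) * l ^ k / (Nat.factorial k : ℝ) * (1 / ((k : ℝ) + 1) ^ 2))
          - (∑' k : ℕ, Real.exp (-l) * l ^ k / (Nat.factorial k : ℝ) * (1 / ((k : ℝ) + 1))) ^ 2))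
      Filter.atTop (nhds 1) := by
  have hlim := ((tendsto_poissonTail_atTop 3).add tendsto_mul_poissonTail_two_sub_sq).add
    tendsto_cube_mul_poissonExpectation_invSuccSqRemainder
  rw [add_zero, add_zero] at hlim
  refine hlim.congr' ?_
  filter_upwards [eventually_gt_atTop 0] with l hl
  change _ = l ^ 3 * (poissonExpectation l _ - poissonExpectation l _ ^ 2)
  rw [poissonExpectation_one_div_add_one_sq hl, poissonExpectation_one_div_add_one hl.ne']
  field_simp
  ring
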